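/- Let R be a commutative ring with elements ε and v such that ε and ε² − ε are units. In the group Sp₄(R) with root unipotents x_α, x_β, x_{α+β}, x_{2α+β} as in the standard C₂ parametrization, define g₁(s,t) = [x_α(s), x_β(t)] and g₂(s,t,u) = [x_β(u), [x_{α+β}(s), x_{−β}(t)]]. Then g₁(s,t) = x_{α+β}(st)·x_{2α+β}(±s²t) and g₂(s,t,u) = x_{α+β}(−stu)·x_{2α+β}(∓s²t²u), and consequently x_{2α+β}(v) can be written as a product of two commutators of elementary symplectic matrices: x_{2α+β}(v) = g₁(1, ∓ε(ε²−ε)⁻¹v) · g₂(1, ε, ±(ε²−ε)⁻¹v). -/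

import Mathlib

open Matrix

/-- The root element `x_α(s)` for the short simple root `α` of `C₂` in `Sp₄`. -/
def xA {R : Type*} [CommRing R] (s : R) : Matrix (Fin 4) (Fin 4) R :=
  1 + Matrix.single 0 1 s - Matrix.single 2 3 s

/-- The root element `x_β(t)` for the long simple root `β` of `C₂`. -/
def xB {R : Type*} [CommRing R] (t : R) : Matrix (Fin 4) (Fin 4) R :=
  1 + Matrix.single 1 2 t

/-- The root element `x_{-β}(t)`. -/
def xmB {R : Type*} [CommRing R] (t : R) : Matrix (Fin 4) (Fin 4) R :=
  1 + Matrix.single 2 1 t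

/-- The root element `x_{α+β}(u)`. -/
def xAB {R : Type*} [CommRing R] (u : R) : Matrix (Fin 4) (Fin 4) R :=
  1 + Matrix.single 0 2 u + Matrix.single 1 3 u

/-- The root element `x_{2α+β}(v)`. -/
def x2AB {R : Type*} [CommRing R] (v : R) : Matrix (Fin 4) (Fin 4) R :=
  1 + Matrix.single 0 3 v

/-- `g₁(s,t) = [x_α(s), x_β(t)]`, written with the explicit inverses
`x_α(s)⁻¹ = x_α(-s)`, `x_β(t)⁻¹ = x_β(-t)`. -/
def g₁ {R : Type*} [CommRing R] (s t : R) : Matrix (Fin 4) (Fin 4) R :=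
  xA s * xB t * xA (-s) * xB (-t)

/-- The inner commutator `K(s,t) = [x_{α+β}(s), x_{-β}(t)]`. -/
def K {R : Type*} [CommRing R] (s t : R) : Matrix (Fin 4) (Fin 4) R :=
  xAB s * xmB t * xAB (-s) * xmB (-t)

/-- The inverse `K(s,t)⁻¹ = [x_{-β}(t), x_{α+β}(s)]`. -/
def Kinv {R : Type*} [CommRing R] (s t : R) : Matrix (Fin 4) (Fin 4) R :=
  xmB t * xAB s * xmB (-t) * xAB (-s)

/-- `g₂(s,t,u) = [x_β(u), [x_{α+β}(s), x_{-β}(t)]]`. -/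
def g₂ {R : Type*} [CommRing R] (s t u : R) : Matrix (Fin 4) (Fin 4) R :=
  xB u * K s t * xB (-u) * Kinv s t

/-! The long root element `x_{2α+β}` is central in the group generated by `x_α` and
`x_β`, and the inner commutator `[x_{α+β}(s), x_{-β}(t)]` is `x_α(st) x_{2α+β}(-s²t)`,
so `g₂(s,t,u)` is the commutator `[x_β(u), x_α(st)]`. Both `g₁` and `g₂` thus land in the
abelian group `x_{α+β}(a) x_{2α+β}(b)`; for the chosen parameters the `x_{α+β}`-parts cancel
and the `x_{2α+β}`-parts add up to `(ε² - ε)(ε² - ε)⁻¹ v = v`. -/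

section

variable {R : Type*} [CommRing R]

theorem xAB_zero : xAB (0 : R) = 1 := by
  simp [xAB]

theorem xAB_mul_xAB (a b : R) : xAB a * xAB b = xAB (a + b) := by
  simp only [xAB, mul_add, add_mul, mul_one, one_mul, single_mul_single_of_ne, ne_eq,
    Fin.reduceEq, not_false_eq_true, add_zero, single_add]
  abel

theorem x2AB_zero : x2AB (0 : R) = 1 := by
  simp [x2AB]

theorem x2AB_mul_x2AB (a b : R) : x2AB a * x2AB b = x2AB (a + b) := by
  simp only [x2AB, mul_add, add_mul, mul_one, one_mul, single_mul_single_of_ne, ne_eq,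
    Fin.reduceEq, not_false_eq_true, add_zero, single_add]
  abel

theorem x2AB_commute_xA (v s : R) : Commute (x2AB v) (xA s) := by
  simp only [commute_iff_eq, x2AB, xA, mul_add, add_mul, mul_sub, sub_mul, mul_one, one_mul,
    single_mul_single_of_ne, ne_eq, Fin.reduceEq, not_false_eq_true, add_zero, sub_zero]
  abel

theorem x2AB_commute_xB (v t : R) : Commute (x2AB v) (xB t) := by
  simp only [commute_iff_eq, x2AB, xB, mul_add, add_mul, mul_one, one_mul,
    single_mul_single_of_ne, ne_eq, Fin.reduceEq, not_false_eq_true, add_zero]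
  abel

theorem x2AB_commute_xAB (v u : R) : Commute (x2AB v) (xAB u) := by
  simp only [commute_iff_eq, x2AB, xAB, mul_add, add_mul, mul_one, one_mul,
    single_mul_single_of_ne, ne_eq, Fin.reduceEq, not_false_eq_true, add_zero]
  abel

theorem xAB_mul_x2AB_mul_xAB_mul_x2AB (a b a' b' : R) :
    xAB a * x2AB b * (xAB a' * x2AB b') = xAB (a + a') * x2AB (b + b') := by
  rw [← mul_assoc, mul_assoc (xAB a), (x2AB_commute_xAB b a').eq, ← mul_assoc, xAB_mul_xAB,
    mul_assoc, x2AB_mul_x2AB]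

theorem g₁_eq_xAB_mul_x2AB (s t : R) : g₁ s t = xAB (s * t) * x2AB (s ^ 2 * t) := by
  ext i j
  fin_cases i <;> fin_cases j <;>
    simp [g₁, xA, xB, xAB, x2AB, Matrix.mul_apply, Fin.sum_univ_four, Matrix.single_apply] <;>
    ring

theorem xB_xA_commutator_eq (u a : R) :
    xB u * xA a * xB (-u) * xA (-a) = xAB (-(a * u)) * x2AB (-(a ^ 2 * u)) := by
  ext i j
  fin_cases i <;> fin_cases j <;>
    simp [xA, xB, xAB, x2AB, Matrix.mul_apply, Fin.sum_univ_four, Matrix.single_apply] <;>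
    ring

theorem K_eq_xA_mul_x2AB (s t : R) : K s t = xA (s * t) * x2AB (-(s ^ 2 * t)) := by
  ext i j
  fin_cases i <;> fin_cases j <;>
    simp [K, xA, xAB, xmB, x2AB, Matrix.mul_apply, Fin.sum_univ_four, Matrix.single_apply] <;>
    ring

theorem Kinv_eq_xA_mul_x2AB (s t : R) : Kinv s t = xA (-(s * t)) * x2AB (s ^ 2 * t) := by
  ext i j
  fin_cases i <;> fin_cases j <;>
    simp [Kinv, xA, xAB, xmB, x2AB, Matrix.mul_apply, Fin.sum_univ_four, Matrix.single_apply] <;>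
    ring

theorem g₂_eq_xAB_mul_x2AB (s t u : R) :
    g₂ s t u = xAB (-(s * t * u)) * x2AB (-(s ^ 2 * t ^ 2 * u)) := by
  have hcomm : Commute (x2AB (-(s ^ 2 * t))) (xB (-u) * xA (-(s * t))) :=
    (x2AB_commute_xB _ _).mul_right (x2AB_commute_xA _ _)
  calc g₂ s t u
      = xB u * xA (s * t) * (x2AB (-(s ^ 2 * t)) * (xB (-u) * xA (-(s * t)))) *
          x2AB (s ^ 2 * t) := by
        simp only [g₂, K_eq_xA_mul_x2AB, Kinv_eq_xA_mul_x2AB, mul_assoc]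
    _ = (xB u * xA (s * t) * xB (-u) * xA (-(s * t))) *
          (x2AB (-(s ^ 2 * t)) * x2AB (s ^ 2 * t)) := by
        rw [hcomm.eq]
        simp only [mul_assoc]
    _ = xAB (-(s * t * u)) * x2AB (-(s ^ 2 * t ^ 2 * u)) := by
        rw [xB_xA_commutator_eq, x2AB_mul_x2AB, neg_add_cancel, x2AB_zero, mul_one]
        congr 3
        ring

end

theorem x2AB_is_product_of_two_commutators_general {R : Type*} [CommRing R]
    (ε : R) (hε' : IsUnit (ε ^ 2 - ε)) (v : R) :
    ∃ c : R, (c = 1 ∨ c = -1) ∧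
      (∀ s t : R, g₁ s t = xAB (s * t) * x2AB (c * (s ^ 2 * t))) ∧
      (∀ s t u : R, g₂ s t u = xAB (-(s * t * u)) * x2AB (-(c * (s ^ 2 * t ^ 2 * u)))) ∧
      x2AB v =
        g₁ 1 (-(c * ε * Ring.inverse (ε ^ 2 - ε) * v)) *
          g₂ 1 ε (-(c * Ring.inverse (ε ^ 2 - ε) * v)) := by
  refine ⟨1, Or.inl rfl, fun s t => by rw [one_mul, g₁_eq_xAB_mul_x2AB],
    fun s t u => by rw [one_mul, g₂_eq_xAB_mul_x2AB], ?_⟩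
  have hinv : (ε ^ 2 - ε) * Ring.inverse (ε ^ 2 - ε) = 1 := Ring.mul_inverse_cancel _ hε'
  calc x2AB v = xAB 0 * x2AB v := by rw [xAB_zero, one_mul]
    _ = _ := by
        rw [g₁_eq_xAB_mul_x2AB, g₂_eq_xAB_mul_x2AB, xAB_mul_x2AB_mul_xAB_mul_x2AB]
        congr 2
        · ring
        · linear_combination (-v) * hinv

/-- If `ε` and `ε² - ε` are units of the commutative ring `R`,
then (for a fixed sign `c = ±1` depending only on the normalization)
`g₁(s,t) = x_{α+β}(st)·x_{2α+β}(±s²t)` and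
`g₂(s,t,u) = x_{α+β}(-stu)·x_{2α+β}(∓s²t²u)`, and consequently every
`x_{2α+β}(v)` is a product of the two commutators
`g₁(1, ∓ε(ε²-ε)⁻¹v)` and `g₂(1, ε, ∓(ε²-ε)⁻¹v)` of elementary symplectic
matrices. -/
theorem x2AB_is_product_of_two_commutators {R : Type*} [CommRing R]
    (ε : R) (hε : IsUnit ε) (hε' : IsUnit (ε ^ 2 - ε)) (v : R) :
    ∃ c : R, (c = 1 ∨ c = -1) ∧
      (∀ s t : R, g₁ s t = xAB (s * t) * x2AB (c * (s ^ 2 * t))) ∧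
      (∀ s t u : R, g₂ s t u = xAB (-(s * t * u)) * x2AB (-(c * (s ^ 2 * t ^ 2 * u)))) ∧
      x2AB v =
        g₁ 1 (-(c * ε * Ring.inverse (ε ^ 2 - ε) * v)) *
          g₂ 1 ε (-(c * Ring.inverse (ε ^ 2 - ε) * v)) :=
  x2AB_is_product_of_two_commutators_general ε hε' v
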